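/- Fix an integer M ≥ 1, layer sizes H_0, …, H_M ≥ 1, and a true parameter w₀. Let X be a random vector in ℝ^N (N = H_0) whose coordinates are independent and identically distributed with finite second moment and E[X_j²] > 0. Then the expected loss L(w) = E‖f(X; w) − f(X; w₀)‖² is a polynomial of total degree exactly 2M in the d matrix entries of w. -/

import Mathlib

open MvPolynomial MeasureTheory ProbabilityTheory

/-- The end-to-end matrix `W_M ⋯ W_1` of a deep linear network with layer sizes
`H 0, H 1, …` and weight matrices `w l : Matrix (Fin (H (l+1))) (Fin (H l)) ℝ`. -/
def dlnProd (H : ℕ → ℕ) (w : ∀ l : ℕ, Matrix (Fin (H (l + 1))) (Fin (H l)) ℝ) :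
    (M : ℕ) → Matrix (Fin (H M)) (Fin (H 0)) ℝ
  | 0 => 1
  | M + 1 => w M * dlnProd H w M

/-- Index type for the `d = Σ_{l=1}^M H_l H_{l-1}` matrix entries of the parameter
`w = (W_1, …, W_M)`. -/
abbrev DlnVars (H : ℕ → ℕ) (M : ℕ) := (l : Fin M) × (Fin (H (l.1 + 1)) × Fin (H l.1))

/-! The end-to-end matrix `A(w) = W_M ⋯ W_1` has entries that are homogeneous polynomials of
degree `M` in the weights, and with the second-moment matrix `c = E[X Xᵀ]` the loss equals
`tr((A(w) - A(w₀)) c (A(w) - A(w₀))ᵀ)`. Its degree-`2M` part is `tr(A(w) c A(w)ᵀ)`, all other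
terms have degree at most `M < 2M`, and the top part is nonzero because at the weights making
every `W_l` the corner matrix unit it equals `c₀₀ = E[X₀²] > 0`. -/

namespace Matrix

variable {m n R S : Type*} [Fintype m] [Fintype n]

-- `tr (B c Bᵀ)`
def quadForm [CommSemiring R] (c : Matrix n n R) (B : Matrix m n R) : R :=
  ∑ i, ∑ j, ∑ j', c j j' * (B i j * B i j')

theorem _root_.RingHom.map_quadForm [CommSemiring R] [CommSemiring S] (f : R →+* S)
    (c : Matrix n n R) (B : Matrix m n R) :
    f (quadForm c B) = quadForm (c.map f) (B.map f) := by
  simp [quadForm, map_sum, map_mul]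

theorem sum_sq_mulVec_eq_quadForm [CommSemiring R] (B : Matrix m n R) (x : n → R) :
    ∑ i, (B *ᵥ x) i ^ 2 = quadForm (vecMulVec x x) B := by
  refine Finset.sum_congr rfl fun i _ => ?_
  simp only [mulVec, dotProduct, sq, Finset.sum_mul_sum, vecMulVec_apply]
  exact Finset.sum_congr rfl fun j _ => Finset.sum_congr rfl fun j' _ => by ring

end Matrix

open Matrix

section Polynomial

variable {σ m n R : Type*} [Fintype m] [Fintype n]

theorem isHomogeneous_quadForm_map_C [CommSemiring R] {k : ℕ} (c : Matrix n n R)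
    {P : Matrix m n (MvPolynomial σ R)} (hP : ∀ i j, (P i j).IsHomogeneous k) :
    (quadForm (c.map C) P).IsHomogeneous (2 * k) := by
  refine IsHomogeneous.sum _ _ _ fun i _ => IsHomogeneous.sum _ _ _ fun j _ =>
    IsHomogeneous.sum _ _ _ fun j' _ => ?_
  simpa [two_mul] using ((hP i j).mul (hP i j')).C_mul (c j j')

theorem eval_quadForm_map_C [CommSemiring R] (f : σ → R) (c : Matrix n n R)
    (P : Matrix m n (MvPolynomial σ R)) :
    eval f (quadForm (c.map C) P) = quadForm c (P.map (eval f)) := by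
  rw [RingHom.map_quadForm, Matrix.map_map]
  simp [Function.comp_def]

theorem totalDegree_quadForm_sub_map_C_sub_le [CommRing R] {k : ℕ} (c : Matrix n n R)
    {P : Matrix m n (MvPolynomial σ R)} (hP : ∀ i j, (P i j).totalDegree ≤ k) (A : Matrix m n R) :
    (quadForm (c.map C) (P - A.map C) - quadForm (c.map C) P).totalDegree ≤ k := by
  have hP' : ∀ i j, P i j ∈ restrictTotalDegree σ R k := fun i j =>
    (mem_restrictTotalDegree σ k _).2 (hP i j)
  have hC : ∀ a : R, C a ∈ restrictTotalDegree σ R k := fun a =>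
    (mem_restrictTotalDegree σ k _).2 (by simp)
  rw [← mem_restrictTotalDegree]
  simp only [quadForm, ← Finset.sum_sub_distrib, map_apply, Matrix.sub_apply, C_mul', ← smul_sub]
  refine Submodule.sum_mem _ fun i _ => Submodule.sum_mem _ fun j _ =>
    Submodule.sum_mem _ fun j' _ => Submodule.smul_mem _ _ ?_
  have hexpand : (P i j - C (A i j)) * (P i j' - C (A i j')) - P i j * P i j' =
      C (A i j * A i j') - (A i j • P i j' + A i j' • P i j) := by
    simp only [smul_eq_C_mul, map_mul]; ring
  rw [hexpand]
  exact Submodule.sub_mem _ (hC _)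
    (Submodule.add_mem _ (Submodule.smul_mem _ _ (hP' i j')) (Submodule.smul_mem _ _ (hP' i j)))

theorem totalDegree_quadForm_sub_map_C [CommRing R] {k : ℕ} (hk : 0 < k) (c : Matrix n n R)
    {P : Matrix m n (MvPolynomial σ R)} (hP : ∀ i j, (P i j).IsHomogeneous k)
    (hq : quadForm (c.map C) P ≠ 0) (A : Matrix m n R) :
    (quadForm (c.map C) (P - A.map C)).totalDegree = 2 * k := by
  have htop := (isHomogeneous_quadForm_map_C c hP).totalDegree hq
  have hlow := totalDegree_quadForm_sub_map_C_sub_le c (fun i j => (hP i j).totalDegree_le) A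
  rw [← add_sub_cancel (quadForm (c.map C) P) (quadForm (c.map C) (P - A.map C)),
    totalDegree_add_eq_left_of_totalDegree_lt (by omega), htop]

end Polynomial

section SecondMoment

variable {Ω m n : Type*} [MeasurableSpace Ω]

noncomputable def secondMomentMatrix (P : Measure Ω) (X : Ω → n → ℝ) : Matrix n n ℝ :=
  Matrix.of fun j j' => ∫ ω, X ω j * X ω j' ∂P

theorem integrable_mul_of_integrable_sq {P : Measure Ω} {f g : Ω → ℝ}
    (hf : AEStronglyMeasurable f P) (hg : AEStronglyMeasurable g P)
    (hf2 : Integrable (fun ω => f ω ^ 2) P) (hg2 : Integrable (fun ω => g ω ^ 2) P) :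
    Integrable (fun ω => f ω * g ω) P :=
  ((memLp_two_iff_integrable_sq hf).2 hf2).integrable_mul ((memLp_two_iff_integrable_sq hg).2 hg2)

theorem integral_sum_sq_mulVec [Fintype m] [Fintype n] {P : Measure Ω} {X : Ω → n → ℝ}
    (hX : ∀ j j', Integrable (fun ω => X ω j * X ω j') P) (B : Matrix m n ℝ) :
    ∫ ω, ∑ i, (B *ᵥ X ω) i ^ 2 ∂P = quadForm (secondMomentMatrix P X) B := by
  have hterm : ∀ i j j', Integrable (fun ω => vecMulVec (X ω) (X ω) j j' * (B i j * B i j')) P :=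
    fun i j j' => (hX j j').mul_const _
  simp only [sum_sq_mulVec_eq_quadForm, quadForm]
  rw [integral_finsetSum _ fun i _ => integrable_finsetSum _ fun j _ =>
    integrable_finsetSum _ fun j' _ => hterm i j j']
  refine Finset.sum_congr rfl fun i _ => ?_
  rw [integral_finsetSum _ fun j _ => integrable_finsetSum _ fun j' _ => hterm i j j']
  refine Finset.sum_congr rfl fun j _ => ?_
  rw [integral_finsetSum _ fun j' _ => hterm i j j']
  exact Finset.sum_congr rfl fun j' _ => integral_mul_const _ _

end SecondMoment

section DeepLinearNetwork

def dlnVarEmb (H : ℕ → ℕ) (M : ℕ) : DlnVars H M → DlnVars H (M + 1) :=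
  fun v => ⟨v.1.castSucc, v.2⟩

noncomputable def dlnLayerPoly (H : ℕ → ℕ) (M : ℕ) :
    Matrix (Fin (H (M + 1))) (Fin (H M)) (MvPolynomial (DlnVars H (M + 1)) ℝ) :=
  Matrix.of fun a b => X ⟨Fin.last M, (a, b)⟩

-- `dlnProd` with every weight replaced by its indeterminate
noncomputable def dlnPoly (H : ℕ → ℕ) :
    (M : ℕ) → Matrix (Fin (H M)) (Fin (H 0)) (MvPolynomial (DlnVars H M) ℝ)
  | 0 => 1
  | M + 1 => dlnLayerPoly H M * (dlnPoly H M).map (rename (dlnVarEmb H M))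

theorem map_eval_dlnPoly (H : ℕ → ℕ) (w : ∀ l : ℕ, Matrix (Fin (H (l + 1))) (Fin (H l)) ℝ) :
    ∀ M, (dlnPoly H M).map (eval fun v => w v.1.1 v.2.1 v.2.2) = dlnProd H w M
  | 0 => by simp [dlnPoly, dlnProd]
  | M + 1 => by
    rw [dlnPoly, dlnProd, Matrix.map_mul, Matrix.map_map, ← map_eval_dlnPoly H w M]
    congr 1
    · ext a b; simp [dlnLayerPoly]
    · ext a b; simp [eval_rename, dlnVarEmb, Function.comp_def]

theorem isHomogeneous_dlnPoly (H : ℕ → ℕ) :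
    ∀ M (i : Fin (H M)) (j : Fin (H 0)), (dlnPoly H M i j).IsHomogeneous M
  | 0, i, j => by
    rw [dlnPoly, Matrix.one_apply]
    split_ifs
    exacts [isHomogeneous_one _ _, isHomogeneous_zero _ _ _]
  | M + 1, i, j => by
    refine IsHomogeneous.sum _ _ _ fun k _ => ?_
    have h := (isHomogeneous_X ℝ (⟨Fin.last M, (i, k)⟩ : DlnVars H (M + 1))).mul
      ((isHomogeneous_dlnPoly H M k j).rename_isHomogeneous (f := dlnVarEmb H M))
    rwa [add_comm 1 M] at h

-- Defined through index values rather than `Matrix.single`, so that it exists for every size.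
def cornerUnit (m n : ℕ) : Matrix (Fin m) (Fin n) ℝ :=
  Matrix.of fun a b => if (a : ℕ) = 0 ∧ (b : ℕ) = 0 then 1 else 0

theorem cornerUnit_mul_cornerUnit {m k n : ℕ} (hk : 0 < k) :
    cornerUnit m k * cornerUnit k n = cornerUnit m n := by
  ext a b
  rw [Matrix.mul_apply, Finset.sum_eq_single ⟨0, hk⟩] <;>
    simp_all [cornerUnit, Fin.ext_iff, ← ite_and, and_comm]

def cornerWeights (H : ℕ → ℕ) (l : ℕ) : Matrix (Fin (H (l + 1))) (Fin (H l)) ℝ :=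
  cornerUnit (H (l + 1)) (H l)

theorem dlnProd_cornerWeights (H : ℕ → ℕ) {M : ℕ} (hM : 1 ≤ M) (hH : ∀ l ≤ M, 0 < H l) :
    dlnProd H (cornerWeights H) M = cornerUnit (H M) (H 0) := by
  induction M, hM using Nat.le_induction with
  | base => simp [dlnProd, cornerWeights]
  | succ M hM ih =>
    rw [dlnProd, ih fun l hl => hH l (by omega), cornerWeights,
      cornerUnit_mul_cornerUnit (hH M (by omega))]

theorem quadForm_cornerUnit {m n : ℕ} (hm : 0 < m) (hn : 0 < n) (c : Matrix (Fin n) (Fin n) ℝ) :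
    quadForm c (cornerUnit m n) = c ⟨0, hn⟩ ⟨0, hn⟩ := by
  rw [quadForm, Finset.sum_eq_single ⟨0, hm⟩, Finset.sum_eq_single ⟨0, hn⟩,
    Finset.sum_eq_single ⟨0, hn⟩]
  all_goals simp_all [cornerUnit, Fin.ext_iff]

end DeepLinearNetwork

theorem dln_expected_loss_is_polynomial_of_degree_two_mul_layers_general
    (M : ℕ) (hM : 1 ≤ M) (H : ℕ → ℕ) (hH : ∀ l ≤ M, 1 ≤ H l)
    (w0 : ∀ l : ℕ, Matrix (Fin (H (l + 1))) (Fin (H l)) ℝ)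
    (Ω : Type) [MeasurableSpace Ω] (P : Measure Ω)
    (X : Ω → Fin (H 0) → ℝ) (hmeas : Measurable X)
    (hL2 : ∀ j, Integrable (fun ω => (X ω j) ^ 2) P)
    (hpos : ∀ j, 0 < ∫ ω, (X ω j) ^ 2 ∂P) :
    ∃ p : MvPolynomial (DlnVars H M) ℝ, p.totalDegree = 2 * M ∧
      ∀ w : ∀ l : ℕ, Matrix (Fin (H (l + 1))) (Fin (H l)) ℝ,
        (∫ ω, ∑ i : Fin (H M),
            ((dlnProd H w M).mulVec (X ω) i - (dlnProd H w0 M).mulVec (X ω) i) ^ 2 ∂P)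
          = eval (fun v => w v.1.1 v.2.1 v.2.2) p := by
  set c := secondMomentMatrix P X
  have hX : ∀ j j', Integrable (fun ω => X ω j * X ω j') P := fun j j' =>
    integrable_mul_of_integrable_sq hmeas.eval.aestronglyMeasurable
      hmeas.eval.aestronglyMeasurable (hL2 j) (hL2 j')
  have hq : quadForm (c.map C) (dlnPoly H M) ≠ 0 := by
    refine ne_of_apply_ne (eval fun v => cornerWeights H v.1.1 v.2.1 v.2.2) ?_
    rw [eval_quadForm_map_C, map_eval_dlnPoly, dlnProd_cornerWeights H hM hH,
      quadForm_cornerUnit (hH M le_rfl) (hH 0 M.zero_le), map_zero]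
    simpa [c, secondMomentMatrix, sq] using (hpos _).ne'
  refine ⟨quadForm (c.map C) (dlnPoly H M - (dlnProd H w0 M).map C),
    totalDegree_quadForm_sub_map_C hM c (isHomogeneous_dlnPoly H M) hq _, fun w => ?_⟩
  simp only [← Pi.sub_apply (_ *ᵥ X _), ← Matrix.sub_mulVec]
  rw [integral_sum_sq_mulVec hX, eval_quadForm_map_C, Matrix.map_sub _ (map_sub _),
    map_eval_dlnPoly]
  simp [c, Matrix.map_map, Function.comp_def]

/-- if the coordinates of the random input `X` are i.i.d. with finite
second moment and `E[X_j²] > 0`, then the expected loss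
`L(w) = E‖f(X; w) − f(X; w₀)‖²` is a polynomial of total degree exactly `2M` in the
matrix entries of `w`. -/
theorem dln_expected_loss_is_polynomial_of_degree_two_mul_layers
    (M : ℕ) (hM : 1 ≤ M) (H : ℕ → ℕ) (hH : ∀ l ≤ M, 1 ≤ H l)
    (w0 : ∀ l : ℕ, Matrix (Fin (H (l + 1))) (Fin (H l)) ℝ)
    (Ω : Type) [MeasurableSpace Ω] (P : Measure Ω) [IsProbabilityMeasure P]
    (X : Ω → Fin (H 0) → ℝ) (hmeas : Measurable X)
    (hindep : iIndepFun (fun j ω => X ω j) P)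
    (hident : ∀ j j', IdentDistrib (fun ω => X ω j) (fun ω => X ω j') P P)
    (hL2 : ∀ j, Integrable (fun ω => (X ω j) ^ 2) P)
    (hpos : ∀ j, 0 < ∫ ω, (X ω j) ^ 2 ∂P) :
    ∃ p : MvPolynomial (DlnVars H M) ℝ, p.totalDegree = 2 * M ∧
      ∀ w : ∀ l : ℕ, Matrix (Fin (H (l + 1))) (Fin (H l)) ℝ,
        (∫ ω, ∑ i : Fin (H M),
            ((dlnProd H w M).mulVec (X ω) i - (dlnProd H w0 M).mulVec (X ω) i) ^ 2 ∂P)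
          = eval (fun v => w v.1.1 v.2.1 v.2.2) p :=
  dln_expected_loss_is_polynomial_of_degree_two_mul_layers_general M hM H hH w0 Ω P X hmeas hL2 hpos
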